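/- Let $n\geq 3$ and let $\mathcal{L}_S$ be the $n\times n$ matrix with diagonal entries $\frac{4}{3}$, super/sub-diagonal entries $-\frac{1}{3}$, and corner entries $+\frac{1}{3}$ in positions $(1,n),(n,1)$. Then $\det(\mathcal{L}_S)=\frac{(2+\sqrt{3})^{n}+(2-\sqrt{3})^{n}+2}{3^{n}}$. -/
import Mathlib

open Matrix Finset

/-- The matrix `𝓛_S`: diagonal `4/3`, subdiagonal and superdiagonal `-1/3`,
corner entries `+1/3` at positions `(1,n)` and `(n,1)`. -/
noncomputable def LSnorm (n : ℕ) : Matrix (Fin n) (Fin n) ℝ :=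
  Matrix.of fun i j =>
    if i = j then 4 / 3
    else if i.val + 1 = j.val ∨ j.val + 1 = i.val then -(1 / 3)
    else if (i.val = 0 ∧ j.val = n - 1) ∨ (i.val = n - 1 ∧ j.val = 0) then 1 / 3
    else 0

/-- cyclic successor on `Fin n` -/
def sigF {n : ℕ} (i : Fin n) : Fin n := ⟨(i.val + 1) % n, Nat.mod_lt _ i.pos⟩

lemma sigF_val {n : ℕ} (i : Fin n) :
    (sigF i).val = if i.val = n - 1 then 0 else i.val + 1 := by
  have h := i.isLt
  simp only [sigF]
  rcases Nat.lt_or_ge (i.val + 1) n with h1 | h1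
  · rw [Nat.mod_eq_of_lt h1, if_neg (by omega)]
  · have h2 : i.val + 1 = n := by omega
    rw [h2, Nat.mod_self, if_pos (by omega)]

lemma sigF_ne_self {n : ℕ} (hn : 2 ≤ n) (i : Fin n) : sigF i ≠ i := by
  intro h
  have hv := congrArg Fin.val h
  rw [sigF_val] at hv
  have hlt := i.isLt
  split at hv <;> omega

lemma sigF_inj {n : ℕ} {i j : Fin n} (h : sigF i = sigF j) : i = j := by
  have hv := congrArg Fin.val h
  rw [sigF_val, sigF_val] at hv
  have hi := i.isLt
  have hj := j.isLt
  apply Fin.ext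
  split at hv <;> split at hv <;> omega

/-- sign: -1 on the last index -/
noncomputable def epsF {n : ℕ} (i : Fin n) : ℝ := if i.val = n - 1 then -1 else 1

lemma epsF_sq {n : ℕ} (i : Fin n) : epsF i * epsF i = 1 := by
  unfold epsF; split <;> norm_num

/-- the signed cyclic shift matrix -/
noncomputable def Qmat (n : ℕ) : Matrix (Fin n) (Fin n) ℝ :=
  Matrix.of fun i j => epsF i * (if j = sigF i then 1 else 0)

noncomputable def sA : ℝ := Real.sqrt (2 + Real.sqrt 3)
noncomputable def tA : ℝ := Real.sqrt (2 - Real.sqrt 3)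

lemma sqrt3_sq : Real.sqrt 3 ^ 2 = 3 := Real.sq_sqrt (by norm_num)

lemma sqrt3_le_two : Real.sqrt 3 ≤ 2 := by
  nlinarith [Real.sq_sqrt (show (0:ℝ) ≤ 3 by norm_num), Real.sqrt_nonneg 3]

lemma sA_sq : sA ^ 2 = 2 + Real.sqrt 3 := Real.sq_sqrt (by positivity)

lemma tA_sq : tA ^ 2 = 2 - Real.sqrt 3 := Real.sq_sqrt (by nlinarith [sqrt3_le_two])

lemma sA_mul_tA : sA * tA = 1 := by
  rw [sA, tA, ← Real.sqrt_mul (by positivity)]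
  have h : (2 + Real.sqrt 3) * (2 - Real.sqrt 3) = 1 := by nlinarith [sqrt3_sq]
  rw [h, Real.sqrt_one]

/-- The factor matrix `C = s•1 - t•Q`. -/
noncomputable def Cmat (n : ℕ) : Matrix (Fin n) (Fin n) ℝ :=
  sA • (1 : Matrix (Fin n) (Fin n) ℝ) - tA • Qmat n

lemma Cmat_apply {n : ℕ} (i j : Fin n) :
    Cmat n i j = (if i = j then sA else 0)
      - epsF i * (if j = sigF i then tA else 0) := by
  simp [Cmat, Qmat, Matrix.one_apply, Matrix.smul_apply]
  split <;> ring

lemma QQt (n : ℕ) (hn : 2 ≤ n) : Qmat n * (Qmat n)ᵀ = 1 := by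
  ext i j
  rw [Matrix.mul_apply]
  have hterm : ∀ k : Fin n, Qmat n i k * (Qmat n)ᵀ k j
      = if k = sigF i then (if sigF i = sigF j then epsF i * epsF j else 0) else 0 := by
    intro k
    simp only [Qmat, Matrix.transpose_apply, Matrix.of_apply]
    by_cases h1 : k = sigF i
    · subst h1
      by_cases h2 : sigF i = sigF j
      · simp [h2]
      · simp [h2]
    · simp [h1]
  rw [Finset.sum_congr rfl (fun k _ => hterm k), Finset.sum_ite_eq' Finset.univ (sigF i)
    (fun _ => if sigF i = sigF j then epsF i * epsF j else 0), if_pos (Finset.mem_univ _)]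
  by_cases hij : i = j
  · subst hij
    rw [if_pos rfl, Matrix.one_apply_eq, epsF_sq]
  · rw [if_neg (fun h => hij (sigF_inj h)), Matrix.one_apply_ne hij]

/-- determinant of the factor -/
lemma det_Cmat (n : ℕ) (hn : 2 ≤ n) : (Cmat n).det = sA ^ n + tA ^ n := by
  obtain ⟨m, rfl⟩ : ∃ m, n = m + 1 := ⟨n - 1, by omega⟩
  have hm : 1 ≤ m := by omega
  rw [Matrix.det_succ_column_zero]
  have hsig0 : ∀ i : Fin (m + 1), ((0 : Fin (m+1)) = sigF i) ↔ i.val = m := by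
    intro i
    rw [Fin.ext_iff, sigF_val]
    simp only [Fin.val_zero]
    constructor
    · intro h; split at h <;> omega
    · intro h; rw [if_pos (by omega)]
  have hzero : ∀ i ∈ (Finset.univ : Finset (Fin (m+1))), i ∉ ({0, Fin.last m} : Finset (Fin (m+1))) →
      (-1 : ℝ) ^ (i : ℕ) * Cmat (m+1) i 0 * ((Cmat (m+1)).submatrix i.succAbove Fin.succ).det = 0 := by
    intro i _ hi
    simp only [Finset.mem_insert, Finset.mem_singleton] at hi
    push_neg at hi
    obtain ⟨h0, hl⟩ := hi
    have hv0 : i.val ≠ 0 := fun h => h0 (Fin.ext h)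
    have hvl : i.val ≠ m := fun h => hl (Fin.ext (by simpa using h))
    have hC : Cmat (m+1) i 0 = 0 := by
      rw [Cmat_apply, if_neg (fun h => h0 h),
        if_neg (fun h => hvl ((hsig0 i).mp h))]
      ring
    rw [hC]; ring
  rw [← Finset.sum_subset (Finset.subset_univ ({0, Fin.last m} : Finset (Fin (m+1)))) hzero,
    Finset.sum_pair (by
      intro h
      have := congrArg Fin.val h
      simp only [Fin.val_zero, Fin.val_last] at this
      omega)]
  -- first term
  have hC0 : Cmat (m+1) 0 0 = sA := by
    rw [Cmat_apply, if_pos rfl, if_neg (fun h => by have := (hsig0 0).mp h; simp at this; omega)]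
    ring
  have hminor0 : ((Cmat (m+1)).submatrix (Fin.succAbove 0) Fin.succ).det = sA ^ m := by
    have htri : ((Cmat (m+1)).submatrix (Fin.succAbove 0) Fin.succ).BlockTriangular id := by
      intro a b hab
      simp only [id_eq] at hab
      simp only [Matrix.submatrix_apply, Fin.succAbove_zero]
      rw [Cmat_apply, if_neg (by
          intro h
          have := congrArg Fin.val h
          simp only [Fin.val_succ] at this
          omega),
        if_neg (by
          intro h
          have hv := congrArg Fin.val h
          rw [sigF_val] at hv
          simp only [Fin.val_succ] at hv
          have := a.isLt; have := b.isLt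
          split at hv <;> omega)]
      ring
    rw [Matrix.det_of_upperTriangular htri]
    have hdiag : ∀ a : Fin m, ((Cmat (m+1)).submatrix (Fin.succAbove 0) Fin.succ) a a = sA := by
      intro a
      simp only [Matrix.submatrix_apply, Fin.succAbove_zero]
      rw [Cmat_apply, if_pos rfl, if_neg (Ne.symm (sigF_ne_self (by omega) _))]
      ring
    rw [Finset.prod_congr rfl (fun a _ => hdiag a), Finset.prod_const, Finset.card_univ,
      Fintype.card_fin]
  -- second term
  have hClast : Cmat (m+1) (Fin.last m) 0 = tA := by
    rw [Cmat_apply, if_neg (by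
        intro h
        have := congrArg Fin.val h
        simp only [Fin.val_last, Fin.val_zero] at this
        omega),
      if_pos ((hsig0 (Fin.last m)).mpr (by simp))]
    have heps : epsF (Fin.last m) = -1 := by
      unfold epsF; rw [if_pos (by simp)]
    rw [heps]; ring
  have hminorl : ((Cmat (m+1)).submatrix (Fin.last m).succAbove Fin.succ).det = (-tA) ^ m := by
    have htri : ((Cmat (m+1)).submatrix (Fin.last m).succAbove Fin.succ).BlockTriangular
        OrderDual.toDual := by
      intro a b hab
      have hab' : a < b := hab
      simp only [Matrix.submatrix_apply, Fin.succAbove_last]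
      rw [Cmat_apply, if_neg (by
          intro h
          have := congrArg Fin.val h
          simp only [Fin.coe_castSucc, Fin.val_succ] at this
          have := a.isLt
          omega),
        if_neg (by
          intro h
          have hv := congrArg Fin.val h
          rw [sigF_val] at hv
          simp only [Fin.coe_castSucc, Fin.val_succ] at hv
          have ha := a.isLt; have hb := b.isLt
          have hablt : a.val < b.val := hab'
          split at hv <;> omega)]
      ring
    rw [Matrix.det_of_lowerTriangular _ htri]
    have hdiag : ∀ a : Fin m, ((Cmat (m+1)).submatrix (Fin.last m).succAbove Fin.succ) a a
        = -tA := by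
      intro a
      simp only [Matrix.submatrix_apply, Fin.succAbove_last]
      have ha := a.isLt
      rw [Cmat_apply, if_neg (by
          intro h
          have := congrArg Fin.val h
          simp only [Fin.coe_castSucc, Fin.val_succ] at this
          omega),
        if_pos (by
          apply Fin.ext
          rw [sigF_val]
          simp only [Fin.coe_castSucc, Fin.val_succ]
          rw [if_neg (by omega)]),
        show epsF (a.castSucc : Fin (m+1)) = 1 by
          unfold epsF
          rw [if_neg (by simp only [Fin.coe_castSucc]; omega)]]
      ring
    rw [Finset.prod_congr rfl (fun a _ => hdiag a), Finset.prod_const, Finset.card_univ,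
      Fintype.card_fin]
  rw [hC0, hClast, hminor0, hminorl]
  simp only [Fin.val_zero, Fin.val_last, pow_zero]
  have hmt : (-1 : ℝ) ^ m * (-tA) ^ m = tA ^ m := by
    rw [← mul_pow]; norm_num
  linear_combination tA * hmt

lemma gram_entry (n : ℕ) (hn : 3 ≤ n) (i j : Fin n) :
    (4 : ℝ) * ((1 : Matrix (Fin n) (Fin n) ℝ) i j) - (Qmat n i j + Qmat n j i)
      = 3 * LSnorm n i j := by
  have hi := i.isLt
  have hj := j.isLt
  by_cases hij : i = j
  · subst hij
    rw [Matrix.one_apply_eq]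
    have hQ : Qmat n i i = 0 := by
      simp only [Qmat, Matrix.of_apply]
      rw [if_neg (fun h => sigF_ne_self (by omega) i h.symm), mul_zero]
    rw [hQ]
    simp only [LSnorm, Matrix.of_apply, if_pos rfl]
    norm_num
  · rw [Matrix.one_apply_ne hij]
    have hij' : i.val ≠ j.val := fun h => hij (Fin.ext h)
    by_cases h1 : j = sigF i
    · have h1v : j.val = if i.val = n-1 then 0 else i.val + 1 := by rw [h1, sigF_val]
      have h2 : ¬ (i = sigF j) := by
        intro h2
        have h2v : i.val = if j.val = n-1 then 0 else j.val+1 := by rw [h2, sigF_val]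
        split at h1v <;> split at h2v <;> omega
      have hQji : Qmat n j i = 0 := by
        simp only [Qmat, Matrix.of_apply]; rw [if_neg (fun h => h2 h), mul_zero]
      have hQij : Qmat n i j = epsF i := by
        simp only [Qmat, Matrix.of_apply]; rw [if_pos h1, mul_one]
      rw [hQij, hQji]
      by_cases hl : i.val = n - 1
      · have hj0 : j.val = 0 := by rw [if_pos hl] at h1v; exact h1v
        have hLS : LSnorm n i j = 1/3 := by
          simp only [LSnorm, Matrix.of_apply]
          rw [if_neg hij, if_neg (by omega), if_pos (Or.inr ⟨hl, hj0⟩)]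
        have heps : epsF i = -1 := by unfold epsF; rw [if_pos hl]
        rw [hLS, heps]; norm_num
      · have hj1 : j.val = i.val + 1 := by rw [if_neg hl] at h1v; exact h1v
        have hLS : LSnorm n i j = -(1/3) := by
          simp only [LSnorm, Matrix.of_apply]
          rw [if_neg hij, if_pos (Or.inl hj1.symm)]
        have heps : epsF i = 1 := by unfold epsF; rw [if_neg hl]
        rw [hLS, heps]; norm_num
    · by_cases h2 : i = sigF j
      · have h2v : i.val = if j.val = n-1 then 0 else j.val + 1 := by rw [h2, sigF_val]
        have hQij : Qmat n i j = 0 := by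
          simp only [Qmat, Matrix.of_apply]; rw [if_neg (fun h => h1 h), mul_zero]
        have hQji : Qmat n j i = epsF j := by
          simp only [Qmat, Matrix.of_apply]; rw [if_pos h2, mul_one]
        rw [hQij, hQji]
        by_cases hl : j.val = n - 1
        · have hi0 : i.val = 0 := by rw [if_pos hl] at h2v; exact h2v
          have hLS : LSnorm n i j = 1/3 := by
            simp only [LSnorm, Matrix.of_apply]
            rw [if_neg hij, if_neg (by omega), if_pos (Or.inl ⟨hi0, hl⟩)]
          have heps : epsF j = -1 := by unfold epsF; rw [if_pos hl]
          rw [hLS, heps]; norm_num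
        · have hi1 : i.val = j.val + 1 := by rw [if_neg hl] at h2v; exact h2v
          have hLS : LSnorm n i j = -(1/3) := by
            simp only [LSnorm, Matrix.of_apply]
            rw [if_neg hij, if_pos (Or.inr hi1.symm)]
          have heps : epsF j = 1 := by unfold epsF; rw [if_neg hl]
          rw [hLS, heps]; norm_num
      · have hQij : Qmat n i j = 0 := by
          simp only [Qmat, Matrix.of_apply]; rw [if_neg (fun h => h1 h), mul_zero]
        have hQji : Qmat n j i = 0 := by
          simp only [Qmat, Matrix.of_apply]; rw [if_neg (fun h => h2 h), mul_zero]
        have hn1 : ¬ (i.val + 1 = j.val ∨ j.val + 1 = i.val) := by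
          rintro (h | h)
          · exact h1 (Fin.ext (by rw [sigF_val, if_neg (by omega)]; omega))
          · exact h2 (Fin.ext (by rw [sigF_val, if_neg (by omega)]; omega))
        have hn2 : ¬ ((i.val = 0 ∧ j.val = n - 1) ∨ (i.val = n - 1 ∧ j.val = 0)) := by
          rintro (⟨ha, hb⟩ | ⟨ha, hb⟩)
          · exact h2 (Fin.ext (by rw [sigF_val, if_pos hb]; omega))
          · exact h1 (Fin.ext (by rw [sigF_val, if_pos ha]; omega))
        have hLS : LSnorm n i j = 0 := by
          simp only [LSnorm, Matrix.of_apply]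
          rw [if_neg hij, if_neg hn1, if_neg hn2]
        rw [hQij, hQji, hLS]; norm_num

lemma gram (n : ℕ) (hn : 3 ≤ n) :
    Cmat n * (Cmat n)ᵀ = (3 : ℝ) • LSnorm n := by
  have hexp : Cmat n * (Cmat n)ᵀ
      = (sA ^ 2 + tA ^ 2) • (1 : Matrix (Fin n) (Fin n) ℝ)
        - (sA * tA) • (Qmat n + (Qmat n)ᵀ) := by
    simp only [Cmat, Matrix.transpose_sub, Matrix.transpose_smul, Matrix.transpose_one,
      sub_mul, mul_sub, Matrix.smul_mul, Matrix.mul_smul, one_mul, mul_one, smul_smul,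
      QQt n (by omega), smul_add]
    rw [add_smul]
    simp only [pow_two]
    abel_nf
    rw [mul_comm tA sA]
    abel
  rw [hexp]
  ext i j
  simp only [Matrix.sub_apply, Matrix.smul_apply, Matrix.add_apply, Matrix.transpose_apply,
    smul_eq_mul, sA_sq, tA_sq, sA_mul_tA]
  have h := gram_entry n hn i j
  linarith [h]

theorem stmt13 (n : ℕ) (hn : 3 ≤ n) :
    (LSnorm n).det =
      ((2 + Real.sqrt 3) ^ n + (2 - Real.sqrt 3) ^ n + 2) / 3 ^ n := by
  have hkey := gram n hn
  have hdet := congrArg Matrix.det hkey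
  rw [Matrix.det_mul, Matrix.det_transpose, det_Cmat n (by omega), Matrix.det_smul,
    Fintype.card_fin] at hdet
  have hexp : (sA ^ n + tA ^ n) * (sA ^ n + tA ^ n)
      = (sA ^ 2) ^ n + (tA ^ 2) ^ n + 2 * (sA * tA) ^ n := by ring
  rw [sA_sq, tA_sq, sA_mul_tA, one_pow] at hexp
  have h3n : (3:ℝ) ^ n ≠ 0 := by positivity
  rw [eq_div_iff h3n]
  linear_combination hexp - hdet
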